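/- arXiv:1611.01465 — 4 statements merged into one kernel-verified Lean document; each statement's English description precedes it below -/
import Mathlib

section
/- Let R be a commutative ring and let 0 → M₁ → M₂ → M₃ → 0 be a short exact sequence of R-modules such that for every commutative R-algebra S the induced sequence 0 → M₁ ⊗_R S → M₂ ⊗_R S → M₃ ⊗_R S → 0 is exact. If M₃ is a finitely presented R-module, then the sequence 0 → M₁ → M₂ → M₃ → 0 splits, i.e., the surjection M₂ → M₃ admits an R-linear section. -/
/-!
Exactness after every base change makes `i` universally injective: tensoring with any module keeps
it injective. A universally injective map reflects solvability of finite systems of linear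
equations. Lift the generators of a finite presentation of `M₃` to `M₂`; the relations then
evaluate to elements of `M₁`, and solving the same system in `M₁` corrects the lift so that it
satisfies the relations, whence it descends to a section of `p`.
-/

universe u

theorem LinearMap.lTensor_injective_of_forall_baseChange_injective {R : Type u} [CommRing R]
    {M₁ M₂ : Type*} [AddCommGroup M₁] [Module R M₁] [AddCommGroup M₂] [Module R M₂]
    (i : M₁ →ₗ[R] M₂)
    (hi : ∀ (S : Type u) [CommRing S] [Algebra R S], Function.Injective (i.baseChange S))
    (N : Type u) [AddCommGroup N] [Module R N] :
    Function.Injective (i.lTensor N) := by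
  let _ : Module Rᵐᵒᵖ N := Module.compHom N ((RingHom.id R).fromOpposite mul_comm)
  have : IsCentralScalar R N := ⟨fun _ _ => rfl⟩
  -- `N` is an `R`-linear retract of the ring `R ⊕ N` with `N² = 0`.
  have hretract : TrivSqZeroExt.sndHom R N ∘ₗ TrivSqZeroExt.inrHom R N = LinearMap.id := rfl
  have hinr : Function.Injective ((TrivSqZeroExt.inrHom R N).rTensor M₁) :=
    Function.LeftInverse.injective (g := (TrivSqZeroExt.sndHom R N).rTensor M₁) fun t => by
      rw [← LinearMap.comp_apply, ← LinearMap.rTensor_comp, hretract, LinearMap.rTensor_id,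
        LinearMap.id_apply]
  have hsquare : i.lTensor (TrivSqZeroExt R N) ∘ₗ (TrivSqZeroExt.inrHom R N).rTensor M₁ =
      (TrivSqZeroExt.inrHom R N).rTensor M₂ ∘ₗ i.lTensor N := by
    rw [LinearMap.lTensor_comp_rTensor, LinearMap.rTensor_comp_lTensor]
  have hcomp := (hi (TrivSqZeroExt R N)).comp hinr
  rw [LinearMap.baseChange_eq_ltensor, ← LinearMap.coe_comp, hsquare, LinearMap.coe_comp] at hcomp
  exact hcomp.of_comp

theorem LinearMap.exists_comp_eq_of_forall_lTensor_injective {R : Type u} [CommRing R]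
    {M₁ M₂ : Type*} [AddCommGroup M₁] [Module R M₁] [AddCommGroup M₂] [Module R M₂]
    {F₀ F₁ : Type u} [AddCommGroup F₀] [Module R F₀] [Module.Finite R F₀] [Module.Projective R F₀]
    [AddCommGroup F₁] [Module R F₁] [Module.Finite R F₁] [Module.Projective R F₁]
    (i : M₁ →ₗ[R] M₂)
    (hi : ∀ (N : Type u) [AddCommGroup N] [Module R N], Function.Injective (i.lTensor N))
    (φ : F₁ →ₗ[R] F₀) (x : F₀ →ₗ[R] M₂) (y : F₁ →ₗ[R] M₁) (h : i ∘ₗ y = x ∘ₗ φ) :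
    ∃ z : F₀ →ₗ[R] M₁, z ∘ₗ φ = y := by
  -- Under `Hom(F, M) ≃ F^∨ ⊗ M`, precomposition with `φ` is `φ^∨ ⊗ M`, so `y` extends along `φ`
  -- iff it vanishes in `coker φ^∨ ⊗ M₁`; there it maps to the image of `x ∘ φ`, which is zero.
  obtain ⟨t, rfl⟩ := (dualTensorHom_bijective (R := R) (M := F₁) (N := M₁)).surjective y
  obtain ⟨s, rfl⟩ := (dualTensorHom_bijective (R := R) (M := F₀) (N := M₂)).surjective x
  have ht : i.lTensor _ t = φ.dualMap.rTensor M₂ s := by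
    apply (dualTensorHom_bijective (R := R) (M := F₁) (N := M₂)).injective
    rw [← LinearMap.comp_apply, dualTensorHom_comp_lTensor, ← LinearMap.comp_apply (x := s),
      dualTensorHom_comp_rTensor_dualMap]
    exact h
  set q := (LinearMap.range φ.dualMap).mkQ
  have hqt : q.rTensor M₁ t = 0 := by
    apply hi _
    rw [map_zero, ← LinearMap.comp_apply, LinearMap.lTensor_comp_rTensor,
      ← LinearMap.rTensor_comp_lTensor, LinearMap.comp_apply, ht, ← LinearMap.comp_apply,
      ← LinearMap.rTensor_comp, LinearMap.range_mkQ_comp, LinearMap.rTensor_zero,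
      LinearMap.zero_apply]
  have hexact : Function.Exact (φ.dualMap.rTensor M₁) (q.rTensor M₁) :=
    rTensor_exact M₁ (LinearMap.exact_iff.mpr (Submodule.ker_mkQ _)) (Submodule.mkQ_surjective _)
  obtain ⟨w, rfl⟩ := (hexact t).mp hqt
  exact ⟨dualTensorHom R F₀ M₁ w,
    (LinearMap.congr_fun (dualTensorHom_comp_rTensor_dualMap φ) w).symm⟩

theorem Module.Projective.exists_comp_eq_of_range_le {R : Type*} [Semiring R]
    {P M N : Type*} [AddCommMonoid P] [Module R P] [Module.Projective R P]
    [AddCommMonoid M] [Module R M] [AddCommMonoid N] [Module R N]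
    (f : M →ₗ[R] N) (g : P →ₗ[R] N) (h : LinearMap.range g ≤ LinearMap.range f) :
    ∃ g' : P →ₗ[R] M, f ∘ₗ g' = g := by
  obtain ⟨g', hg'⟩ := Module.projective_lifting_property f.rangeRestrict
    (g.codRestrict _ fun c => h ⟨c, rfl⟩) f.surjective_rangeRestrict
  exact ⟨g', LinearMap.ext fun c => congrArg Subtype.val (LinearMap.congr_fun hg' c)⟩

theorem splitting_of_finitePresentation_of_baseChange_exact_general
    (R : Type u) [CommRing R]
    (M₁ M₂ M₃ : Type u) [AddCommGroup M₁] [Module R M₁] [AddCommGroup M₂] [Module R M₂]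
    [AddCommGroup M₃] [Module R M₃]
    (i : M₁ →ₗ[R] M₂) (p : M₂ →ₗ[R] M₃)
    (hp : Function.Surjective p)
    (hexact : LinearMap.range i = LinearMap.ker p)
    (hbc : ∀ (S : Type u) [CommRing S] [Algebra R S],
      Function.Injective (i.baseChange S) ∧
        LinearMap.range (i.baseChange S) = LinearMap.ker (p.baseChange S) ∧
        Function.Surjective (p.baseChange S))
    (hfp : Module.FinitePresentation R M₃) :
    ∃ s : M₃ →ₗ[R] M₂, p ∘ₗ s = LinearMap.id := by
  have hi := i.lTensor_injective_of_forall_baseChange_injective fun S _ _ => (hbc S).1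
  obtain ⟨pres, _, _⟩ := Module.finitePresentation_iff_exists_presentation.{u, u}.mp hfp
  have hpi : p ∘ₗ i = 0 := LinearMap.range_le_ker_iff.mp hexact.le
  obtain ⟨x, hx⟩ := Module.projective_lifting_property p pres.π hp
  have hxrel : LinearMap.range (x ∘ₗ pres.map) ≤ LinearMap.range i := by
    rw [hexact, LinearMap.range_le_ker_iff, ← LinearMap.comp_assoc, hx, pres.π_comp_map]
  obtain ⟨y, hy⟩ := Module.Projective.exists_comp_eq_of_range_le i _ hxrel
  obtain ⟨z, hz⟩ := i.exists_comp_eq_of_forall_lTensor_injective hi pres.map x y hy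
  have hrel : (x - i ∘ₗ z) ∘ₗ pres.map = 0 := by
    rw [LinearMap.sub_comp, LinearMap.comp_assoc, hz, hy, sub_self]
  refine ⟨pres.desc (.ofπ' _ hrel), (LinearMap.cancel_right pres.surjective_π).mp ?_⟩
  rw [LinearMap.comp_assoc, pres.desc_comp_π, Module.Relations.Solution.ofπ'_π,
    LinearMap.comp_sub, hx, ← LinearMap.comp_assoc, hpi, LinearMap.zero_comp, sub_zero,
    LinearMap.id_comp]

/-- If `0 → M₁ → M₂ → M₃ → 0` is a short exact sequence of `R`-modules that stays exact
after tensoring with every commutative `R`-algebra `S`, and `M₃` is finitely presented,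
then the sequence splits: the surjection `M₂ → M₃` has an `R`-linear section. -/
theorem splitting_of_finitePresentation_of_baseChange_exact
    (R : Type u) [CommRing R]
    (M₁ M₂ M₃ : Type u) [AddCommGroup M₁] [Module R M₁] [AddCommGroup M₂] [Module R M₂]
    [AddCommGroup M₃] [Module R M₃]
    (i : M₁ →ₗ[R] M₂) (p : M₂ →ₗ[R] M₃)
    (hi : Function.Injective i) (hp : Function.Surjective p)
    (hexact : LinearMap.range i = LinearMap.ker p)
    (hbc : ∀ (S : Type u) [CommRing S] [Algebra R S],
      Function.Injective (i.baseChange S) ∧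
        LinearMap.range (i.baseChange S) = LinearMap.ker (p.baseChange S) ∧
        Function.Surjective (p.baseChange S))
    (hfp : Module.FinitePresentation R M₃) :
    ∃ s : M₃ →ₗ[R] M₂, p ∘ₗ s = LinearMap.id :=
  splitting_of_finitePresentation_of_baseChange_exact_general R M₁ M₂ M₃ i p hp hexact hbc hfp
end

section
/- Let R be a commutative ring and M an R-module. The canonical map Hom_R(M,R) ⊗_R S → Hom_S(M ⊗_R S, S), sending w ⊗ s to s times the S-linear extension of w, is surjective for every commutative R-algebra S if and only if M is a finitely generated projective R-module. -/
open TensorProduct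

universe u

variable (R : Type u) [CommRing R] (M : Type u) [AddCommGroup M] [Module R M]

/-- The `R`-linear map sending `w ∈ Hom_R(M, R)` to its `S`-linear extension
`M ⊗_R S → S`, `m ⊗ s ↦ w(m)·s`. -/
noncomputable def dualExtension (S : Type u) [CommRing S] [Algebra R S] :
    (M →ₗ[R] R) →ₗ[R] ((S ⊗[R] M) →ₗ[S] S) where
  toFun w := LinearMap.liftBaseChange S ((Algebra.linearMap R S) ∘ₗ w)
  map_add' w₁ w₂ := by
    apply LinearMap.ext
    intro x
    induction x using TensorProduct.induction_on with
    | zero => simp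
    | tmul s m => simp [mul_add]
    | add x y hx hy =>
        simp only [map_add, LinearMap.add_apply] at hx hy ⊢
        rw [hx, hy]
  map_smul' r w := by
    apply LinearMap.ext
    intro x
    induction x using TensorProduct.induction_on with
    | zero => simp
    | tmul s m => simp [Algebra.smul_def, mul_left_comm, mul_comm]
    | add x y hx hy =>
        simp only [map_add, LinearMap.smul_apply, RingHom.id_apply] at hx hy ⊢
        rw [hx, hy]

/-! Restricting `S`-linear maps `S ⊗[R] M → S` along `m ↦ 1 ⊗ m` identifies the canonical map with
`dualTensorHom : M* ⊗ S → Hom_R(M, S)`. If `M` is finite projective, that map is bijective. Conversely,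
take `S = R ⊕ M` with square-zero `M`: lifting the inclusion `M → S` and projecting back onto `M`
writes the identity of `M` as an element of `M* ⊗ M`, which forces `M` to be finite projective. -/

variable {R M}

theorem liftBaseChangeEquiv_symm_liftBaseChange_dualExtension
    {S : Type u} [CommRing S] [Algebra R S] (t : S ⊗[R] (M →ₗ[R] R)) :
    (LinearMap.liftBaseChangeEquiv S).symm (LinearMap.liftBaseChange S (dualExtension R M S) t) =
      dualTensorHom R M S (TensorProduct.comm R S _ t) := by
  induction t using TensorProduct.induction_on with
  | zero => simp
  | add a b ha hb => simp only [map_add, ha, hb]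
  | tmul s w =>
    ext m
    simp [dualExtension, Algebra.smul_def, mul_comm]

theorem surjective_liftBaseChange_dualExtension [Module.Finite R M] [Module.Projective R M]
    (S : Type u) [CommRing S] [Algebra R S] :
    Function.Surjective (LinearMap.liftBaseChange S (dualExtension R M S)) := by
  intro F
  obtain ⟨v, hv⟩ := (dualTensorHom_bijective (N := S)).2 ((LinearMap.liftBaseChangeEquiv S).symm F)
  refine ⟨(TensorProduct.comm R S _).symm v, (LinearMap.liftBaseChangeEquiv S).symm.injective ?_⟩
  rw [liftBaseChangeEquiv_symm_liftBaseChange_dualExtension, LinearEquiv.apply_symm_apply, hv]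

theorem one_mem_range_dualTensorHom_of_surjective_liftBaseChange_dualExtension
    {S : Type u} [CommRing S] [Algebra R S] (ι : M →ₗ[R] S) (π : S →ₗ[R] M)
    (hπι : π ∘ₗ ι = LinearMap.id)
    (h : Function.Surjective (LinearMap.liftBaseChange S (dualExtension R M S))) :
    1 ∈ LinearMap.range (dualTensorHom R M M) := by
  obtain ⟨t, ht⟩ := h (LinearMap.liftBaseChange S ι)
  have hι : dualTensorHom R M S (TensorProduct.comm R S _ t) = ι := by
    rw [← liftBaseChangeEquiv_symm_liftBaseChange_dualExtension, ht]
    exact (LinearMap.liftBaseChangeEquiv S).symm_apply_apply ι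
  refine ⟨π.lTensor _ (TensorProduct.comm R S _ t), ?_⟩
  rw [← LinearMap.comp_apply, dualTensorHom_comp_lTensor, LinearMap.comp_apply, hι]
  exact hπι

variable (R M)

/-- The canonical map `Hom_R(M,R) ⊗_R S → Hom_S(M ⊗_R S, S)`, `w ⊗ s ↦ s · (extension
of w)`, is surjective for every commutative `R`-algebra `S` iff `M` is a finitely
generated projective `R`-module. -/
theorem surjective_dual_baseChange_iff_finite_projective :
    (∀ (S : Type u) [CommRing S] [Algebra R S],
        Function.Surjective
          (LinearMap.liftBaseChange S (dualExtension R M S) :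
            S ⊗[R] (M →ₗ[R] R) →ₗ[S] ((S ⊗[R] M) →ₗ[S] S)))
      ↔ (Module.Finite R M ∧ Module.Projective R M) := by
  refine ⟨fun h => ?_, fun ⟨_, _⟩ => surjective_liftBaseChange_dualExtension⟩
  -- `TrivSqZeroExt R M` is a commutative ring only once `M` carries its (trivial) right action.
  let _ : Module Rᵐᵒᵖ M := Module.compHom M ((RingHom.id R).fromOpposite mul_comm)
  have _ : IsCentralScalar R M := ⟨fun _ _ => rfl⟩
  have hid := one_mem_range_dualTensorHom_of_surjective_liftBaseChange_dualExtension
    (TrivSqZeroExt.inrHom R M) (TrivSqZeroExt.sndHom R M) (by ext; simp) (h _)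
  exact ⟨.of_one_mem_range_dualTensorHom hid, .of_one_mem_range_dualTensorHom hid⟩
end

section
/- Let R be a commutative ring and u: V₂ → V₁ an R-linear map between R-modules. Then u is surjective if and only if for every commutative R-algebra S the induced map Hom_S(V₁ ⊗_R S, S) → Hom_S(V₂ ⊗_R S, S), given by w ↦ w ∘ (u ⊗ id_S), is injective. -/
/-!
Surjectivity of `u` makes `u ⊗ id_S` surjective, so precomposition with it is injective.
Conversely, the cokernel `M` of `u` embeds `R`-linearly into the commutative `R`-algebra
`S = R ⊕ M` (trivial square-zero extension). The induced functional
`S ⊗_R V₁ → S, s ⊗ v ↦ s • [v]` vanishes after composing with `u ⊗ id_S`, so by injectivity it is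
zero, which forces every class `[v]` in the cokernel to vanish.
-/

open TensorProduct

universe u

theorem LinearMap.liftBaseChange_comp_baseChange {R S M N : Type*} [CommRing R] [CommRing S]
    [Algebra R S] [AddCommGroup M] [Module R M] [AddCommGroup N] [Module R N]
    (f : N →ₗ[R] S) (g : M →ₗ[R] N) :
    f.liftBaseChange S ∘ₗ g.baseChange S = (f ∘ₗ g).liftBaseChange S := by
  ext
  simp

theorem Module.exists_injective_linearMap_commRing (R : Type u) [CommRing R] (M : Type u)
    [AddCommGroup M] [Module R M] :
    ∃ (S : Type u) (_ : CommRing S) (_ : Algebra R S) (f : M →ₗ[R] S),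
      Function.Injective f := by
  let : Module Rᵐᵒᵖ M := Module.compHom _ ((RingHom.id R).fromOpposite mul_comm)
  have : IsCentralScalar R M := ⟨fun _ _ => rfl⟩
  exact ⟨TrivSqZeroExt R M, inferInstance, inferInstance, TrivSqZeroExt.inrHom R M,
    TrivSqZeroExt.inr_injective⟩

/-- An `R`-linear map `u : V₂ → V₁` is surjective iff for every commutative `R`-algebra
`S` the induced map `Hom_S(V₁ ⊗_R S, S) → Hom_S(V₂ ⊗_R S, S)`, `w ↦ w ∘ (u ⊗ id_S)`,
is injective. -/
theorem surjective_iff_dual_baseChange_injective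
    (R : Type u) [CommRing R] (V₁ V₂ : Type u) [AddCommGroup V₁] [Module R V₁]
    [AddCommGroup V₂] [Module R V₂] (u : V₂ →ₗ[R] V₁) :
    Function.Surjective u ↔
      ∀ (S : Type u) [CommRing S] [Algebra R S],
        Function.Injective
          (fun w : (S ⊗[R] V₁) →ₗ[S] S => w ∘ₗ u.baseChange S) := by
  refine ⟨fun hu S _ _ w₁ w₂ h ↦
    (LinearMap.cancel_right (f := w₁) (f' := w₂) (u.lTensor_surjective S hu)).mp h,
    fun h v ↦ ?_⟩
  obtain ⟨S, _, _, f, hf⟩ := Module.exists_injective_linearMap_commRing R (V₁ ⧸ LinearMap.range u)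
  let w := (f ∘ₗ (LinearMap.range u).mkQ).liftBaseChange S
  have hw : w ∘ₗ u.baseChange S = 0 ∘ₗ u.baseChange S := by
    rw [LinearMap.liftBaseChange_comp_baseChange, LinearMap.comp_assoc,
      LinearMap.range_mkQ_comp, LinearMap.comp_zero, LinearMap.zero_comp]
    ext
    simp
  have hv : f (Submodule.Quotient.mk v) = 0 := by
    simpa [w] using LinearMap.congr_fun (h S hw) (1 ⊗ₜ v)
  rwa [map_eq_zero_iff f hf, Submodule.Quotient.mk_eq_zero] at hv
end

section
/- Let R be a commutative ring and M an R-module. Then M is finitely presented if and only if for every directed system {N_i} of R-modules the canonical map colim_i Hom_R(M, N_i) → Hom_R(M, colim_i N_i) is bijective. -/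
/-!
If `M = Rⁿ ⧸ K` with `K` finitely generated, a map `M → L` lifts on the basis of `Rⁿ` to some
`N i`, and the lift kills the finitely many generators of `K` at a later stage; a map `M → N i`
dying in `L` dies at a later stage on the finitely many generators of `M`.
Conversely, testing `id_M` against the directed union of the finitely generated submodules of `M`
shows that `M` is finite; then, for `p : Rⁿ ↠ M`, testing `id_M` against the directed system of
the `Rⁿ ⧸ P` with `P ≤ ker p` finitely generated exhibits `M` as a retract of a finitely
presented module.
-/

universe u

open Function LinearMap

theorem LinearMap.exists_comp_eq_of_ker_le {R F M N : Type*} [Ring R] [AddCommGroup F] [Module R F]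
    [AddCommGroup M] [Module R M] [AddCommGroup N] [Module R N] {p : F →ₗ[R] M}
    (hp : Surjective p) {v : F →ₗ[R] N} (h : ker p ≤ ker v) : ∃ w : M →ₗ[R] N, w ∘ₗ p = v :=
  ⟨(ker p).liftQ v h ∘ₗ (p.quotKerEquivOfSurjective hp).symm.toLinearMap, by
    ext x; simp [quotKerEquivOfSurjective_symm_apply]⟩

theorem Module.finitePresentation_of_comp_eq_id {R P M : Type*} [Ring R] [AddCommGroup P]
    [Module R P] [AddCommGroup M] [Module R M] [Module.FinitePresentation R P]
    (q : P →ₗ[R] M) (s : M →ₗ[R] P) (hqs : q ∘ₗ s = .id) : Module.FinitePresentation R M := by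
  have hq : Surjective q := fun x => ⟨s x, LinearMap.congr_fun hqs x⟩
  have hker : ker q = range (.id - s ∘ₗ q) := by
    ext x
    refine ⟨fun hx => ⟨x, by simp [mem_ker.1 hx]⟩, ?_⟩
    rintro ⟨y, rfl⟩
    simp [← comp_apply q s, hqs]
  exact Module.finitePresentation_of_surjective q hq (hker ▸ Submodule.fg_range _)

section DirectedColimit

variable {R : Type*} [Ring R] {ι : Type*} [Preorder ι] {N : ι → Type*}
  [∀ i, AddCommGroup (N i)] [∀ i, Module R (N i)] {L : Type*} [AddCommGroup L] [Module R L]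

structure IsDirectedColimit (t : ∀ i j, i ≤ j → N i →ₗ[R] N j) (g : ∀ i, N i →ₗ[R] L) :
    Prop where
  map_map : ∀ (i j k : ι) (hij : i ≤ j) (hjk : j ≤ k) (x : N i),
    t j k hjk (t i j hij x) = t i k (le_trans hij hjk) x
  map_transition : ∀ (i j : ι) (hij : i ≤ j) (x : N i), g j (t i j hij x) = g i x
  exists_eq : ∀ x : L, ∃ i y, g i y = x
  exists_map_eq_zero : ∀ (i : ι) (y : N i), g i y = 0 → ∃ (j : ι) (hij : i ≤ j), t i j hij y = 0

namespace IsDirectedColimit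

variable {t : ∀ i j, i ≤ j → N i →ₗ[R] N j} {g : ∀ i, N i →ₗ[R] L}
  {M : Type*} [AddCommGroup M] [Module R M]

theorem exists_forall_map_eq_zero [IsDirectedOrder ι] (h : IsDirectedColimit t g) {i : ι}
    (s : Finset (N i)) (hs : ∀ y ∈ s, g i y = 0) :
    ∃ (j : ι) (hij : i ≤ j), ∀ y ∈ s, t i j hij y = 0 := by
  classical
  induction s using Finset.induction_on with
  | empty => exact ⟨i, le_rfl, by simp⟩
  | insert y s _ ih =>
    rw [Finset.forall_mem_insert] at hs
    obtain ⟨j, hij, hj⟩ := ih hs.2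
    obtain ⟨k, hik, hk⟩ := h.exists_map_eq_zero i y hs.1
    obtain ⟨l, hjl, hkl⟩ := exists_ge_ge j k
    refine ⟨l, hij.trans hjl, (Finset.forall_mem_insert ..).2 ⟨?_, fun z hz => ?_⟩⟩
    · rw [← h.map_map i k l hik hkl, hk, map_zero]
    · rw [← h.map_map i j l hij hjl, hj z hz, map_zero]

theorem exists_comp_eq_zero [IsDirectedOrder ι] (h : IsDirectedColimit t g) [Module.Finite R M]
    {i : ι} (ψ : M →ₗ[R] N i) (hψ : g i ∘ₗ ψ = 0) :
    ∃ (j : ι) (hij : i ≤ j), t i j hij ∘ₗ ψ = 0 := by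
  classical
  obtain ⟨s, hs⟩ := Module.Finite.fg_top (R := R) (M := M)
  obtain ⟨j, hij, hj⟩ := h.exists_forall_map_eq_zero (s.image ψ) <| by
    simpa [Finset.forall_mem_image] using fun x _ => LinearMap.congr_fun hψ x
  exact ⟨j, hij, ext_on hs fun x hx => hj _ (Finset.mem_image_of_mem ψ hx)⟩

theorem exists_forall_eq [Nonempty ι] [IsDirectedOrder ι] (h : IsDirectedColimit t g)
    {κ : Type*} [Finite κ] (x : κ → L) : ∃ (i : ι) (y : κ → N i), ∀ k, g i (y k) = x k := by
  choose idx y hy using fun k => h.exists_eq (x k)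
  obtain ⟨i, hi⟩ := Finite.exists_le idx
  exact ⟨i, fun k => t (idx k) i (hi k) (y k), fun k => by rw [h.map_transition, hy]⟩

theorem exists_comp_eq_of_basis [Nonempty ι] [IsDirectedOrder ι] (h : IsDirectedColimit t g)
    {κ : Type*} [Finite κ] (b : Module.Basis κ R M) (φ : M →ₗ[R] L) :
    ∃ (i : ι) (ψ : M →ₗ[R] N i), g i ∘ₗ ψ = φ := by
  obtain ⟨i, y, hy⟩ := h.exists_forall_eq (φ ∘ b)
  exact ⟨i, b.constr ℕ y, b.ext fun k => by simp [hy]⟩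

theorem exists_comp_eq [Nonempty ι] [IsDirectedOrder ι] (h : IsDirectedColimit t g)
    [Module.FinitePresentation R M] (φ : M →ₗ[R] L) :
    ∃ (i : ι) (ψ : M →ₗ[R] N i), g i ∘ₗ ψ = φ := by
  obtain ⟨n, p, hp⟩ := Module.Finite.exists_fin' R M
  have : Module.Finite R (ker p) :=
    Module.Finite.iff_fg.2 (Module.FinitePresentation.fg_ker p hp)
  obtain ⟨i, u, hu⟩ := h.exists_comp_eq_of_basis (Pi.basisFun R (Fin n)) (φ ∘ₗ p)
  obtain ⟨j, hij, hj⟩ := h.exists_comp_eq_zero (u ∘ₗ (ker p).subtype) <| by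
    rw [← LinearMap.comp_assoc, hu, LinearMap.comp_assoc, p.comp_ker_subtype, comp_zero]
  obtain ⟨ψ, hψ⟩ := exists_comp_eq_of_ker_le hp (v := t i j hij ∘ₗ u)
    fun z hz => LinearMap.congr_fun hj ⟨z, hz⟩
  refine ⟨j, ψ, (cancel_right hp).1 ?_⟩
  have hg : g j ∘ₗ t i j hij = g i := LinearMap.ext (h.map_transition i j hij)
  rw [LinearMap.comp_assoc, hψ, ← LinearMap.comp_assoc, hg, hu]

end IsDirectedColimit

theorem Submodule.isDirectedColimit_inclusion {M : Type*} [AddCommGroup M] [Module R M]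
    {S : ι → Submodule R M} (hS : Monotone S) (hcover : ∀ x, ∃ i, x ∈ S i) :
    IsDirectedColimit (fun _ _ hij => inclusion (hS hij)) (fun i => (S i).subtype) where
  map_map _ _ _ _ _ _ := rfl
  map_transition _ _ _ _ := rfl
  exists_eq x := let ⟨i, hi⟩ := hcover x; ⟨i, ⟨x, hi⟩, rfl⟩
  exists_map_eq_zero i _ hy := ⟨i, le_rfl, Subtype.ext hy⟩

theorem Submodule.isDirectedColimit_mapQ [Nonempty ι] [IsDirectedOrder ι]
    {F M : Type*} [AddCommGroup F] [Module R F] [AddCommGroup M] [Module R M]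
    {Q : ι → Submodule R F} (hQ : Monotone Q) {p : F →ₗ[R] M} (hp : Surjective p)
    (hle : ∀ i, Q i ≤ ker p) (hcover : ∀ z ∈ ker p, ∃ i, z ∈ Q i) :
    IsDirectedColimit (fun i j hij => (Q i).mapQ (Q j) LinearMap.id (hQ hij))
      (fun i => (Q i).liftQ p (hle i)) where
  map_map i _ _ _ _ x := by
    obtain ⟨z, rfl⟩ := (Q i).mkQ_surjective x
    rfl
  map_transition i _ _ x := by
    obtain ⟨z, rfl⟩ := (Q i).mkQ_surjective x
    rfl
  exists_eq x :=
    let ⟨z, hz⟩ := hp x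
    ⟨Classical.arbitrary ι, (Q _).mkQ z, hz⟩
  exists_map_eq_zero i y hy := by
    obtain ⟨z, rfl⟩ := (Q i).mkQ_surjective y
    obtain ⟨k, hk⟩ := hcover z hy
    obtain ⟨j, hij, hkj⟩ := exists_ge_ge i k
    exact ⟨j, hij, (Submodule.Quotient.mk_eq_zero _).2 (hQ hkj hk)⟩

end DirectedColimit

def LiftsThroughDirectedColimits (R M : Type u) [Ring R] [AddCommGroup M] [Module R M] : Prop :=
  ∀ (ι : Type u) [Preorder ι] [IsDirectedOrder ι] [Nonempty ι]
    (N : ι → Type u) [∀ i, AddCommGroup (N i)] [∀ i, Module R (N i)]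
    (t : ∀ i j, i ≤ j → N i →ₗ[R] N j) (L : Type u) [AddCommGroup L] [Module R L]
    (g : ∀ i, N i →ₗ[R] L), IsDirectedColimit t g →
      ∀ φ : M →ₗ[R] L, ∃ (i : ι) (ψ : M →ₗ[R] N i), g i ∘ₗ ψ = φ

namespace LiftsThroughDirectedColimits

variable {R M : Type u} [Ring R] [AddCommGroup M] [Module R M]

theorem finite (H : LiftsThroughDirectedColimits R M) : Module.Finite R M := by
  let ι := {P : Submodule R M // P.FG}
  have : IsDirectedOrder ι := ⟨fun P Q => ⟨⟨P.1 ⊔ Q.1, P.2.sup Q.2⟩, le_sup_left, le_sup_right⟩⟩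
  have : Nonempty ι := ⟨⟨⊥, Submodule.fg_bot⟩⟩
  obtain ⟨P, ψ, hψ⟩ := H ι _ _ M _
    (Submodule.isDirectedColimit_inclusion (S := Subtype.val) (fun _ _ => id)
      fun x => ⟨⟨_, Submodule.fg_span_singleton x⟩, Submodule.mem_span_singleton_self x⟩) .id
  have hP : P.1 = ⊤ := eq_top_iff.2 fun x _ => by
    have hx : (ψ x : M) = x := LinearMap.congr_fun hψ x
    exact hx ▸ (ψ x).2
  exact ⟨hP ▸ P.2⟩

theorem finitePresentation (H : LiftsThroughDirectedColimits R M) :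
    Module.FinitePresentation R M := by
  have := H.finite
  obtain ⟨n, p, hp⟩ := Module.Finite.exists_fin' R M
  let ι := {P : Submodule R (Fin n → R) // P.FG ∧ P ≤ ker p}
  have : IsDirectedOrder ι := ⟨fun P Q =>
    ⟨⟨P.1 ⊔ Q.1, P.2.1.sup Q.2.1, sup_le P.2.2 Q.2.2⟩, (le_sup_left : P.1 ≤ _),
      (le_sup_right : Q.1 ≤ _)⟩⟩
  have : Nonempty ι := ⟨⟨⊥, Submodule.fg_bot, bot_le⟩⟩
  obtain ⟨P, ψ, hψ⟩ := H ι _ _ M _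
    (Submodule.isDirectedColimit_mapQ (Q := fun P : ι => P.1) (fun _ _ => id) hp
      (fun P => P.2.2) fun z hz => ⟨⟨_, Submodule.fg_span_singleton z,
        (Submodule.span_singleton_le_iff_mem _ _).2 hz⟩, Submodule.mem_span_singleton_self z⟩) .id
  have : Module.FinitePresentation R ((Fin n → R) ⧸ P.1) :=
    Module.finitePresentation_of_surjective _ P.1.mkQ_surjective <| by
      rw [Submodule.ker_mkQ]
      exact P.2.1
  exact Module.finitePresentation_of_comp_eq_id _ ψ hψ

end LiftsThroughDirectedColimits

/-- `M` is a finitely presented `R`-module iff for every directed system `{N i}` of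
`R`-modules (with directed colimit `L`, presented by a compatible cocone `g` which is
surjective and has the colimit kernel property), the canonical map
`colim_i Hom_R(M, N i) → Hom_R(M, colim_i N i)` is bijective; bijectivity is expressed by:
every map `M → L` factors through some `N i`, and any map `M → N i` vanishing in `L`
already vanishes in some `N j`, `j ≥ i`. -/
theorem finitePresentation_iff_hom_commutes_with_directed_colimits
    (R M : Type u) [CommRing R] [AddCommGroup M] [Module R M] :
    Module.FinitePresentation R M ↔
      ∀ (ι : Type u) [Preorder ι] [IsDirected ι (· ≤ ·)] [Nonempty ι]
        (N : ι → Type u) [∀ i, AddCommGroup (N i)] [∀ i, Module R (N i)]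
        (t : ∀ i j, i ≤ j → N i →ₗ[R] N j)
        (L : Type u) [AddCommGroup L] [Module R L] (g : ∀ i, N i →ₗ[R] L),
        (∀ (i j k : ι) (hij : i ≤ j) (hjk : j ≤ k) (x : N i),
            t j k hjk (t i j hij x) = t i k (le_trans hij hjk) x) →
        (∀ (i j : ι) (hij : i ≤ j) (x : N i), g j (t i j hij x) = g i x) →
        (∀ x : L, ∃ i y, g i y = x) →
        (∀ (i : ι) (y : N i), g i y = 0 → ∃ (j : ι) (hij : i ≤ j), t i j hij y = 0) →
        ((∀ φ : M →ₗ[R] L, ∃ (i : ι) (ψ : M →ₗ[R] N i), (g i) ∘ₗ ψ = φ) ∧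
          (∀ (i : ι) (ψ : M →ₗ[R] N i), (g i) ∘ₗ ψ = 0 →
            ∃ (j : ι) (hij : i ≤ j), (t i j hij) ∘ₗ ψ = 0)) := by
  refine ⟨fun _ ι _ _ _ N _ _ t L _ _ g hc hg hs hk => ?_, fun H => ?_⟩
  · have h : IsDirectedColimit t g := ⟨hc, hg, hs, hk⟩
    exact ⟨h.exists_comp_eq, fun _ ψ hψ => h.exists_comp_eq_zero ψ hψ⟩
  · exact LiftsThroughDirectedColimits.finitePresentation
      fun ι _ _ _ N _ _ t L _ _ g h => (H ι N t L g h.1 h.2 h.3 h.4).1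
end
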